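/- Let d ≥ 1, let 0 < λ ≤ Λ be constants, and let A : ℝ^{d+1} → Matrix (Fin d) (Fin d) ℝ be symmetric matrix-valued with λ|ξ|² ≤ ⟨A(t,x)ξ, ξ⟩ ≤ Λ|ξ|² for all ξ. Fix y ∈ ℝ^d, τ ∈ ℝ, r > 0, and define h(t,x) = (1 + (t-τ)/r²)^{-dλ/(2Λ)} · exp((1/(4Λ))(1 - |x-y|²/(t-τ+r²))) for t > τ. Then h satisfies the differential inequality ∂ₜh - ∑_{i,j} a^{ij}(t,x) ∂ᵢ∂ⱼh ≥ 0 for all t > τ and x ∈ ℝ^d. -/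

import Mathlib

open Real

/-- Second spatial partial derivative `∂ᵢ∂ⱼ f` at `x`. -/
noncomputable def secondPartial (d : ℕ) (f : EuclideanSpace ℝ (Fin d) → ℝ)
    (x : EuclideanSpace ℝ (Fin d)) (i j : Fin d) : ℝ :=
  fderiv ℝ (fun z => fderiv ℝ f z (EuclideanSpace.single j 1)) x
    (EuclideanSpace.single i 1)

/-! With `S = t - τ + r²`, the function `h` is, at fixed time, a Gaussian
`K · exp (-‖x - y‖² / (4ΛS))`, and `∂ₜh / h = -dλ / (2ΛS) + ‖x - y‖² / (4ΛS²)`.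
Computing the Hessian of the Gaussian,
`Ph / h = (Λ‖x - y‖² - ⟨A(x - y), x - y⟩) / (4Λ²S²) + (tr A - dλ) / (2ΛS)`,
and both terms are nonnegative by the two parabolicity bounds
(the lower one applied to the basis vectors gives `tr A ≥ dλ`). -/

section QuadraticForm

variable {ι : Type*} [Fintype ι] [DecidableEq ι] {M : Matrix ι ι ℝ} {lam : ℝ}

lemma le_diag_of_le_quadForm
    (hM : ∀ ξ : EuclideanSpace ℝ ι, lam * ‖ξ‖ ^ 2 ≤ ∑ i, ∑ j, M i j * ξ i * ξ j) (i : ι) :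
    lam ≤ M i i := by
  simpa [PiLp.single_apply, mul_ite, ite_mul, Finset.sum_ite_eq,
    Finset.sum_ite_eq'] using hM (EuclideanSpace.single i 1)

lemma card_mul_le_trace_of_le_quadForm
    (hM : ∀ ξ : EuclideanSpace ℝ ι, lam * ‖ξ‖ ^ 2 ≤ ∑ i, ∑ j, M i j * ξ i * ξ j) :
    Fintype.card ι * lam ≤ M.trace := by
  simpa [Matrix.trace, nsmul_eq_mul] using
    Finset.sum_le_sum fun i (_ : i ∈ Finset.univ) => le_diag_of_le_quadForm hM i

end QuadraticForm

section Gaussian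

variable {d : ℕ} (K b : ℝ) (y : EuclideanSpace ℝ (Fin d))

lemma hasFDerivAt_exp_mul_norm_sub_sq (x : EuclideanSpace ℝ (Fin d)) :
    HasFDerivAt (fun z : EuclideanSpace ℝ (Fin d) => exp (b * ‖z - y‖ ^ 2))
      (exp (b * ‖x - y‖ ^ 2) • (b • ((2 : ℕ) • innerSL ℝ (x - y)))) x :=
  ((((hasFDerivAt_id x).sub_const y).norm_sq).const_mul b).exp

lemma fderiv_gaussian_single (j : Fin d) :
    (fun z => fderiv ℝ (fun z => K * exp (b * ‖z - y‖ ^ 2)) z (EuclideanSpace.single j 1)) =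
      fun z => K * (2 * b) * (exp (b * ‖z - y‖ ^ 2) * (z j - y j)) := by
  funext z
  rw [((hasFDerivAt_exp_mul_norm_sub_sq b y z).const_mul K).fderiv]
  simp only [map_sub, smul_apply, sub_apply,
    coe_innerSL_apply, EuclideanSpace.inner_single_right, Real.ringHom_apply, nsmul_eq_mul,
    Nat.cast_ofNat, one_mul, smul_eq_mul]
  ring

lemma secondPartial_gaussian (x : EuclideanSpace ℝ (Fin d)) (i j : Fin d) :
    secondPartial d (fun z => K * exp (b * ‖z - y‖ ^ 2)) x i j =
      K * exp (b * ‖x - y‖ ^ 2) *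
        (4 * b ^ 2 * (x i - y i) * (x j - y j) + if i = j then 2 * b else 0) := by
  have hcoord : HasFDerivAt (fun z : EuclideanSpace ℝ (Fin d) => z j - y j)
      (EuclideanSpace.proj j : EuclideanSpace ℝ (Fin d) →L[ℝ] ℝ) x := by
    simpa using (EuclideanSpace.proj (𝕜 := ℝ) j).hasFDerivAt.sub_const (y j)
  have hderiv : HasFDerivAt
      (fun z : EuclideanSpace ℝ (Fin d) => K * (2 * b) * (exp (b * ‖z - y‖ ^ 2) * (z j - y j)))
      _ x := ((hasFDerivAt_exp_mul_norm_sub_sq b y x).mul hcoord).const_mul (K * (2 * b))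
  rw [secondPartial, fderiv_gaussian_single, hderiv.fderiv]
  simp only [map_sub, smul_apply, add_apply,
    sub_apply, smul_add, PiLp.proj_apply, PiLp.single_apply, coe_innerSL_apply,
    EuclideanSpace.inner_single_right, Real.ringHom_apply, nsmul_eq_mul, Nat.cast_ofNat, one_mul,
    smul_eq_mul, mul_ite, mul_one, mul_zero, @eq_comm _ j i]
  split_ifs <;> ring

lemma sum_mul_secondPartial_gaussian (M : Matrix (Fin d) (Fin d) ℝ) (x : EuclideanSpace ℝ (Fin d)) :
    ∑ i, ∑ j, M i j * secondPartial d (fun z => K * exp (b * ‖z - y‖ ^ 2)) x i j =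
      K * exp (b * ‖x - y‖ ^ 2) *
        (4 * b ^ 2 * ∑ i, ∑ j, M i j * (x - y) i * (x - y) j + 2 * b * M.trace) := by
  simp only [secondPartial_gaussian, PiLp.sub_apply, Matrix.trace, Matrix.diag, mul_add,
    mul_ite, mul_zero, Finset.sum_add_distrib, Finset.sum_ite_eq, Finset.mem_univ, if_true,
    Finset.mul_sum]
  congr 1 <;> refine Finset.sum_congr rfl fun i _ => ?_
  · exact Finset.sum_congr rfl fun j _ => by ring
  · ring

end Gaussian

lemma hasDerivAt_rpow_mul_exp_div (p c u τ r t : ℝ) (hr : 0 < r) (ht : τ < t) :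
    HasDerivAt (fun s => (1 + (s - τ) / r ^ 2) ^ p * exp (c * (1 - u / (s - τ + r ^ 2))))
      ((1 + (t - τ) / r ^ 2) ^ p * exp (c * (1 - u / (t - τ + r ^ 2))) *
        (p / (t - τ + r ^ 2) + c * u / (t - τ + r ^ 2) ^ 2)) t := by
  have hS : 0 < t - τ + r ^ 2 := by nlinarith
  have hB : 1 + (t - τ) / r ^ 2 = (t - τ + r ^ 2) / r ^ 2 := by field_simp; ring
  have hbase : HasDerivAt (fun s : ℝ => 1 + (s - τ) / r ^ 2) (1 / r ^ 2) t := by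
    simpa using (((hasDerivAt_id t).sub_const τ).div_const (r ^ 2)).const_add 1
  have hdenom : HasDerivAt (fun s : ℝ => s - τ + r ^ 2) 1 t := by
    simpa using ((hasDerivAt_id t).sub_const τ).add_const (r ^ 2)
  refine ((hbase.rpow_const (p := p) (Or.inl (by rw [hB]; positivity))).mul
    (((((hasDerivAt_const t u).div hdenom hS.ne').const_sub 1).const_mul c).exp)).congr_deriv ?_
  rw [Pi.div_apply, Real.rpow_sub (by rw [hB]; positivity), Real.rpow_one, hB]
  generalize exp (c * (1 - u / (t - τ + r ^ 2))) = E
  field_simp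
  ring

lemma supersolution_factor_nonneg {d lam Lam S u Q T : ℝ} (hLam : 0 < Lam) (hS : 0 < S)
    (hQ : Q ≤ Lam * u) (hT : d * lam ≤ T) :
    0 ≤ -(d * lam) / (2 * Lam) / S + 1 / (4 * Lam) * u / S ^ 2 -
      (4 * (-(1 / (4 * Lam) / S)) ^ 2 * Q + 2 * (-(1 / (4 * Lam) / S)) * T) := by
  have hsplit : -(d * lam) / (2 * Lam) / S + 1 / (4 * Lam) * u / S ^ 2 -
        (4 * (-(1 / (4 * Lam) / S)) ^ 2 * Q + 2 * (-(1 / (4 * Lam) / S)) * T) =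
      (Lam * u - Q) / (4 * Lam ^ 2 * S ^ 2) + (T - d * lam) / (2 * Lam * S) := by
    field_simp
    ring
  rw [hsplit]
  have := sub_nonneg.2 hQ
  have := sub_nonneg.2 hT
  positivity

theorem stmt_0_general (d : ℕ) (lam Lam : ℝ) (hlam : 0 < lam) (hle : lam ≤ Lam)
    (A : ℝ → EuclideanSpace ℝ (Fin d) → Matrix (Fin d) (Fin d) ℝ)
    (hpar : ∀ t x (ξ : EuclideanSpace ℝ (Fin d)),
      lam * ‖ξ‖ ^ 2 ≤ ∑ i, ∑ j, A t x i j * ξ i * ξ j ∧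
        ∑ i, ∑ j, A t x i j * ξ i * ξ j ≤ Lam * ‖ξ‖ ^ 2)
    (y : EuclideanSpace ℝ (Fin d)) (τ : ℝ) (r : ℝ) (hr : 0 < r)
    (h : ℝ → EuclideanSpace ℝ (Fin d) → ℝ)
    (hdef : ∀ t x, h t x =
      (1 + (t - τ) / r ^ 2) ^ (-((d : ℝ) * lam) / (2 * Lam)) *
        Real.exp ((1 / (4 * Lam)) * (1 - ‖x - y‖ ^ 2 / (t - τ + r ^ 2)))) :
    ∀ t x, τ < t →
      deriv (fun s => h s x) t -
          ∑ i, ∑ j, A t x i j * secondPartial d (h t) x i j ≥ 0 := by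
  intro t x ht
  have hLam : 0 < Lam := hlam.trans_le hle
  have hS : 0 < t - τ + r ^ 2 := by nlinarith
  have hgauss : h t = fun z => (1 + (t - τ) / r ^ 2) ^ (-((d : ℝ) * lam) / (2 * Lam)) *
      exp (1 / (4 * Lam)) * exp (-(1 / (4 * Lam) / (t - τ + r ^ 2)) * ‖z - y‖ ^ 2) := by
    funext z
    rw [hdef, mul_assoc, ← Real.exp_add]
    congr 2
    field_simp
    ring
  have htime : deriv (fun s => h s x) t = h t x * (-((d : ℝ) * lam) / (2 * Lam) / (t - τ + r ^ 2)
      + 1 / (4 * Lam) * ‖x - y‖ ^ 2 / (t - τ + r ^ 2) ^ 2) := by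
    rw [funext fun s => hdef s x, hdef, (hasDerivAt_rpow_mul_exp_div _ _ _ τ r t hr ht).deriv]
  have hspace : ∑ i, ∑ j, A t x i j * secondPartial d (h t) x i j = h t x *
      (4 * (-(1 / (4 * Lam) / (t - τ + r ^ 2))) ^ 2 * ∑ i, ∑ j, A t x i j * (x - y) i * (x - y) j
        + 2 * (-(1 / (4 * Lam) / (t - τ + r ^ 2))) * (A t x).trace) := by
    rw [hgauss, sum_mul_secondPartial_gaussian]
  have hpos : 0 < h t x := by
    have hbase : 0 < 1 + (t - τ) / r ^ 2 := by
      have := div_pos (sub_pos.2 ht) (pow_pos hr 2)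
      linarith
    rw [hdef]
    exact mul_pos (Real.rpow_pos_of_pos hbase _) (Real.exp_pos _)
  rw [htime, hspace, ← mul_sub, ge_iff_le]
  refine mul_nonneg hpos.le (supersolution_factor_nonneg hLam hS (hpar t x (x - y)).2 ?_)
  simpa using card_mul_le_trace_of_le_quadForm fun ξ => (hpar t x ξ).1

/-- the auxiliary function `h` is a supersolution, `Ph ≥ 0`,
for `t > τ`. -/
theorem stmt_0 (d : ℕ) (hd : 1 ≤ d) (lam Lam : ℝ) (hlam : 0 < lam) (hle : lam ≤ Lam)
    (A : ℝ → EuclideanSpace ℝ (Fin d) → Matrix (Fin d) (Fin d) ℝ)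
    (hsymm : ∀ t x, (A t x).IsSymm)
    (hpar : ∀ t x (ξ : EuclideanSpace ℝ (Fin d)),
      lam * ‖ξ‖ ^ 2 ≤ ∑ i, ∑ j, A t x i j * ξ i * ξ j ∧
        ∑ i, ∑ j, A t x i j * ξ i * ξ j ≤ Lam * ‖ξ‖ ^ 2)
    (y : EuclideanSpace ℝ (Fin d)) (τ : ℝ) (r : ℝ) (hr : 0 < r)
    (h : ℝ → EuclideanSpace ℝ (Fin d) → ℝ)
    (hdef : ∀ t x, h t x =
      (1 + (t - τ) / r ^ 2) ^ (-((d : ℝ) * lam) / (2 * Lam)) *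
        Real.exp ((1 / (4 * Lam)) * (1 - ‖x - y‖ ^ 2 / (t - τ + r ^ 2)))) :
    ∀ t x, τ < t →
      deriv (fun s => h s x) t -
          ∑ i, ∑ j, A t x i j * secondPartial d (h t) x i j ≥ 0 :=
  stmt_0_general d lam Lam hlam hle A hpar y τ r hr h hdef
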